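/- For every t ∈ ℂ⁴ (with no restriction on the parameters), the dimension of the deformed Bott–Chern cohomology H_BC^{1,1}(t) = (ker(∂) ∩ ker(δ_t) ∩ Λ^{1,1}) / ∂(δ_t(Λ^{0,0})) equals 4. (Here δ_t(Λ^{0,0}) = 0, so H_BC^{1,1}(t) = ker(∂) ∩ ker(δ_t) ∩ Λ^{1,1}.) -/

import Mathlib

noncomputable section

open ExteriorAlgebra

/-- The exterior algebra `Λ` over `ℂ` on six generators. -/
abbrev Lam : Type := ExteriorAlgebra ℂ (Fin 6 → ℂ)

/-- The generators `x₁, x₂, x₃` of bidegree `(1,0)` (indexed by `0, 1, 2`). -/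
def xg (i : Fin 3) : Lam := ExteriorAlgebra.ι ℂ (Pi.single (Fin.castAdd 3 i) 1)

/-- The generators `y₁, y₂, y₃` of bidegree `(0,1)` (indexed by `0, 1, 2`). -/
def yg (j : Fin 3) : Lam := ExteriorAlgebra.ι ℂ (Pi.single (Fin.natAdd 3 j) 1)

/-- The ordered wedge monomial `x_{i₁}∧⋯∧x_{i_p}∧y_{j₁}∧⋯∧y_{j_q}` attached
to finsets `s = {i₁ < ⋯ < i_p}` and `u = {j₁ < ⋯ < j_q}`. -/
def monom (s u : Finset (Fin 3)) : Lam :=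
  ((s.sort (· ≤ ·)).map xg).prod * ((u.sort (· ≤ ·)).map yg).prod

/-- The bigraded component `Λ^{p,q}`, the span of the monomials of bidegree `(p,q)`. -/
def bigraded (p q : ℤ) : Submodule ℂ Lam :=
  Submodule.span ℂ
    {m | ∃ s u : Finset (Fin 3), (s.card : ℤ) = p ∧ (u.card : ℤ) = q ∧ m = monom s u}

/-- The component of pure total degree `k` of `Λ`. -/
def degComp (k : ℕ) : Submodule ℂ Lam :=
  LinearMap.range (ExteriorAlgebra.ι ℂ : (Fin 6 → ℂ) →ₗ[ℂ] Lam) ^ k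

/-- The graded Leibniz rule: `d(a∧b) = d(a)∧b + (−1)ᵏ a∧d(b)` for `a` of pure
total degree `k`. -/
def IsAntiderivation (d : Lam →ₗ[ℂ] Lam) : Prop :=
  ∀ (k : ℕ), ∀ a ∈ degComp k, ∀ b : Lam,
    d (a * b) = d a * b + ((-1 : ℂ) ^ k) • (a * d b)

/-- `d` is the map `∂`: the antiderivation with `∂x₁ = ∂x₂ = 0`, `∂x₃ = −x₁∧x₂`,
`∂yⱼ = 0`. -/
def IsDel (d : Lam →ₗ[ℂ] Lam) : Prop :=
  IsAntiderivation d ∧ d (xg 0) = 0 ∧ d (xg 1) = 0 ∧ d (xg 2) = -(xg 0 * xg 1) ∧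
    (∀ j, d (yg j) = 0)

/-- `d` is the map `δ_t`: the antiderivation with `δ_t x₁ = δ_t x₂ = 0`,
`δ_t x₃ = t₂₁ x₁∧y₁ − t₁₁ x₂∧y₁ + t₂₂ x₁∧y₂ − t₁₂ x₂∧y₂`, `δ_t y₁ = δ_t y₂ = 0`,
`δ_t y₃ = −y₁∧y₂`. -/
def IsDelta (t11 t12 t21 t22 : ℂ) (d : Lam →ₗ[ℂ] Lam) : Prop :=
  IsAntiderivation d ∧ d (xg 0) = 0 ∧ d (xg 1) = 0 ∧
    d (xg 2) = t21 • (xg 0 * yg 0) - t11 • (xg 1 * yg 0)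
      + t22 • (xg 0 * yg 1) - t12 • (xg 1 * yg 1) ∧
    d (yg 0) = 0 ∧ d (yg 1) = 0 ∧ d (yg 2) = -(yg 0 * yg 1)

/-- The dimension of the quotient of the subspace `K` by (its intersection with)
the subspace `I`; when `I ⊆ K` this is `dim (K / I)`. -/
def quotDim (K I : Submodule ℂ Lam) : ℕ :=
  Module.finrank ℂ (↥K ⧸ Submodule.comap K.subtype I)

-- simp lemmas for Pi.single evaluations
@[simp] lemma single_cc (i i' : Fin 3) :
    (Pi.single (Fin.castAdd 3 i) 1 : Fin 6 → ℂ) (Fin.castAdd 3 i') = if i = i' then 1 else 0 := by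
  simp only [Pi.single_apply, Fin.ext_iff, Fin.coe_castAdd]
  by_cases h : (i:ℕ) = (i':ℕ) <;> simp [h] <;> omega

@[simp] lemma single_cn (i j : Fin 3) :
    (Pi.single (Fin.castAdd 3 i) 1 : Fin 6 → ℂ) (Fin.natAdd 3 j) = 0 := by
  rw [Pi.single_apply, if_neg]
  simp only [Fin.ext_iff, Fin.coe_castAdd, Fin.coe_natAdd]
  omega

@[simp] lemma single_nc (j i : Fin 3) :
    (Pi.single (Fin.natAdd 3 j) 1 : Fin 6 → ℂ) (Fin.castAdd 3 i) = 0 := by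
  rw [Pi.single_apply, if_neg]
  simp only [Fin.ext_iff, Fin.coe_castAdd, Fin.coe_natAdd]
  omega

@[simp] lemma single_nn (j j' : Fin 3) :
    (Pi.single (Fin.natAdd 3 j) 1 : Fin 6 → ℂ) (Fin.natAdd 3 j') = if j = j' then 1 else 0 := by
  simp only [Pi.single_apply, Fin.ext_iff, Fin.coe_natAdd]
  by_cases h : (j:ℕ) = (j':ℕ) <;> simp [h] <;> omega

-- antiderivation basics
lemma mem_degComp_one (v : Fin 6 → ℂ) : ExteriorAlgebra.ι ℂ v ∈ degComp 1 := by
  rw [degComp, pow_one]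
  exact ⟨v, rfl⟩

lemma d_one (d : Lam →ₗ[ℂ] Lam) (h : IsAntiderivation d) : d 1 = 0 := by
  have h1 : (1 : Lam) ∈ degComp 0 := by
    rw [degComp, pow_zero]
    exact Submodule.one_le.mp le_rfl
  have := h 0 1 h1 1
  simp only [mul_one, pow_zero, one_smul, one_mul] at this
  exact (left_eq_add.mp this)

lemma d_xg_mul (d : Lam →ₗ[ℂ] Lam) (h : IsAntiderivation d) (i : Fin 3) (b : Lam) :
    d (xg i * b) = d (xg i) * b - xg i * d b := by
  have := h 1 (xg i) (mem_degComp_one _) b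
  simpa [sub_eq_add_neg] using this

lemma d_yg_mul (d : Lam →ₗ[ℂ] Lam) (h : IsAntiderivation d) (j : Fin 3) (b : Lam) :
    d (yg j * b) = d (yg j) * b - yg j * d b := by
  have := h 1 (yg j) (mem_degComp_one _) b
  simpa [sub_eq_add_neg] using this

def altPick {n : ℕ} (p : Fin n → Fin 6) : (Fin 6 → ℂ) [⋀^Fin n]→ₗ[ℂ] ℂ :=
  (Matrix.detRowAlternating).compLinearMap (LinearMap.funLeft ℂ ℂ p)

lemma altPick_apply {n : ℕ} (p : Fin n → Fin 6) (v : Fin n → Fin 6 → ℂ) :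
    altPick p v = Matrix.det (Matrix.of fun i j => v i (p j)) := rfl

def coef2 (k l : Fin 6) : Lam →ₗ[ℂ] ℂ :=
  ExteriorAlgebra.liftAlternating fun i => match i with | 2 => altPick ![k, l] | _ => 0

def coef3 (k l m : Fin 6) : Lam →ₗ[ℂ] ℂ :=
  ExteriorAlgebra.liftAlternating fun i => match i with | 3 => altPick ![k, l, m] | _ => 0

lemma coef2_apply (k l : Fin 6) (a b : Fin 6 → ℂ) :
    coef2 k l (ι ℂ a * ι ℂ b) = a k * b l - a l * b k := by
  rw [coef2, liftAlternating_ι_mul, liftAlternating_ι]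
  show (altPick ![k, l]) ![a, b] = _
  rw [altPick_apply, Matrix.det_fin_two]
  simp

lemma coef3_apply (k l m : Fin 6) (a b c : Fin 6 → ℂ) :
    coef3 k l m (ι ℂ a * (ι ℂ b * ι ℂ c)) =
      a k * (b l * c m - b m * c l) - a l * (b k * c m - b m * c k)
        + a m * (b k * c l - b l * c k) := by
  rw [coef3, liftAlternating_ι_mul, liftAlternating_ι_mul, liftAlternating_ι]
  show (altPick ![k, l, m]) ![a, b, c] = _
  rw [altPick_apply, Matrix.det_fin_three]
  simp
  ring

lemma coef2_xy (i₀ j₀ i j : Fin 3) :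
    coef2 (Fin.castAdd 3 i₀) (Fin.natAdd 3 j₀) (xg i * yg j)
      = if i = i₀ ∧ j = j₀ then 1 else 0 := by
  rw [xg, yg, coef2_apply]
  by_cases h1 : i = i₀ <;> by_cases h2 : j = j₀ <;> simp only [single_cc, single_cn, single_nc, single_nn] <;> simp [h1, h2]

lemma coef3_xyy (i₀ i j j' : Fin 3) :
    coef3 (Fin.castAdd 3 i₀) (Fin.natAdd 3 (0:Fin 3)) (Fin.natAdd 3 (1:Fin 3)) (xg i * (yg j * yg j'))
      = (if i = i₀ then 1 else 0) *
        ((if j = 0 then 1 else 0) * (if j' = 1 then 1 else 0)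
          - (if j = 1 then 1 else 0) * (if j' = 0 then 1 else 0)) := by
  rw [xg, yg, yg, coef3_apply]
  simp only [single_cc, single_cn, single_nc, single_nn]
  simp

lemma coef3_xxy (j₀ i i' j : Fin 3) :
    coef3 (Fin.castAdd 3 (0:Fin 3)) (Fin.castAdd 3 (1:Fin 3)) (Fin.natAdd 3 j₀) (xg i * (xg i' * yg j))
      = (if i = 0 then 1 else 0) * ((if i' = 1 then 1 else 0) * (if j = j₀ then 1 else 0))
        - (if i = 1 then 1 else 0) * ((if i' = 0 then 1 else 0) * (if j = j₀ then 1 else 0))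
        := by
  rw [xg, xg, yg, coef3_apply]
  simp only [single_cc, single_cn, single_nc, single_nn]
  simp

lemma coef3_del_val (del : Lam →ₗ[ℂ] Lam) (h : IsDel del) (j₀ i j : Fin 3) :
    coef3 (Fin.castAdd 3 (0:Fin 3)) (Fin.castAdd 3 (1:Fin 3)) (Fin.natAdd 3 j₀)
        (del (xg i * yg j)) = if i = 2 ∧ j = j₀ then -1 else 0 := by
  obtain ⟨ha, h0, h1, h2, hy⟩ := h
  rw [d_xg_mul del ha, hy, mul_zero, sub_zero]
  fin_cases i
  · simp [h0]
  · simp [h1]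
  · rw [show ((⟨2, by omega⟩ : Fin 3)) = 2 from rfl]
    rw [h2, neg_mul, map_neg, mul_assoc, coef3_xxy]
    by_cases hj : j = j₀ <;> simp [hj]

lemma coef3_delta_val (t11 t12 t21 t22 : ℂ) (delta : Lam →ₗ[ℂ] Lam)
    (h : IsDelta t11 t12 t21 t22 delta) (i₀ i j : Fin 3) (hi : i ≠ 2) :
    coef3 (Fin.castAdd 3 i₀) (Fin.natAdd 3 (0:Fin 3)) (Fin.natAdd 3 (1:Fin 3))
        (delta (xg i * yg j)) = if i = i₀ ∧ j = 2 then 1 else 0 := by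
  obtain ⟨ha, h0, h1, h2, hy0, hy1, hy2⟩ := h
  rw [d_xg_mul delta ha]
  have hx : delta (xg i) = 0 := by
    fin_cases i
    · exact h0
    · exact h1
    · exact absurd rfl hi
  rw [hx, zero_mul, zero_sub]
  fin_cases j
  · simp [hy0]
  · simp [hy1]
  · rw [show ((⟨2, by omega⟩ : Fin 3)) = 2 from rfl]
    rw [hy2, mul_neg, neg_neg, coef3_xyy]
    by_cases hii : i = i₀ <;> simp [hii]

lemma monom_single (i j : Fin 3) : monom {i} {j} = xg i * yg j := by
  simp [monom, Finset.sort_singleton]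

lemma monom_empty : monom ∅ ∅ = 1 := by
  simp [monom]

lemma bigraded11 : bigraded 1 1
    = Submodule.span ℂ (Set.range fun p : Fin 3 × Fin 3 => xg p.1 * yg p.2) := by
  unfold bigraded
  congr 1
  ext m
  constructor
  · rintro ⟨s, u, hs, hu, rfl⟩
    obtain ⟨i, rfl⟩ := Finset.card_eq_one.mp (by exact_mod_cast hs)
    obtain ⟨j, rfl⟩ := Finset.card_eq_one.mp (by exact_mod_cast hu)
    exact ⟨(i, j), (monom_single i j).symm⟩
  · rintro ⟨⟨i, j⟩, rfl⟩
    exact ⟨{i}, {j}, by simp, by simp, (monom_single i j).symm⟩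

lemma bigraded00 : bigraded 0 0 = Submodule.span ℂ {(1 : Lam)} := by
  unfold bigraded
  congr 1
  ext m
  constructor
  · rintro ⟨s, u, hs, hu, rfl⟩
    obtain rfl : s = ∅ := Finset.card_eq_zero.mp (by exact_mod_cast hs)
    obtain rfl : u = ∅ := Finset.card_eq_zero.mp (by exact_mod_cast hu)
    simp [monom_empty]
  · rintro rfl
    exact ⟨∅, ∅, by simp, by simp, monom_empty.symm⟩


set_option maxHeartbeats 2000000 in
/-- for every `t`,
`dim H_BC^{1,1}(t) = dim ((ker ∂ ∩ ker δ_t ∩ Λ^{1,1}) / ∂(δ_t(Λ^{0,0}))) = 4`. -/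
theorem stmt14 (t11 t12 t21 t22 : ℂ) (del delta : Lam →ₗ[ℂ] Lam)
    (hdel : IsDel del) (hdelta : IsDelta t11 t12 t21 t22 delta) :
    quotDim (LinearMap.ker del ⊓ LinearMap.ker delta ⊓ bigraded 1 1)
      (Submodule.map del (Submodule.map delta (bigraded 0 0))) = 4 := by
  classical
  set B : Fin 4 → Lam := ![xg 0 * yg 0, xg 0 * yg 1, xg 1 * yg 0, xg 1 * yg 1] with hB
  have hI : Submodule.map del (Submodule.map delta (bigraded 0 0)) = ⊥ := by
    rw [bigraded00, Submodule.map_span, Set.image_singleton, d_one delta hdelta.1,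
      Submodule.span_zero_singleton, Submodule.map_bot]
  have hBli : LinearIndependent ℂ B := by
    rw [Fintype.linearIndependent_iff]
    intro g hg
    have key : ∀ i₀ j₀ : Fin 3,
        coef2 (Fin.castAdd 3 i₀) (Fin.natAdd 3 j₀) (∑ i, g i • B i) = 0 := by
      intro i₀ j₀; rw [hg, map_zero]
    have expand : ∀ i₀ j₀ : Fin 3,
        g 0 * coef2 (Fin.castAdd 3 i₀) (Fin.natAdd 3 j₀) (xg 0 * yg 0)
        + g 1 * coef2 (Fin.castAdd 3 i₀) (Fin.natAdd 3 j₀) (xg 0 * yg 1)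
        + g 2 * coef2 (Fin.castAdd 3 i₀) (Fin.natAdd 3 j₀) (xg 1 * yg 0)
        + g 3 * coef2 (Fin.castAdd 3 i₀) (Fin.natAdd 3 j₀) (xg 1 * yg 1) = 0 := by
      intro i₀ j₀
      have := key i₀ j₀
      simpa only [hB, Fin.sum_univ_four, Matrix.cons_val_zero, Matrix.cons_val_one,
        Matrix.head_cons, Matrix.cons_val_two, Matrix.tail_cons, Matrix.cons_val_three,
        map_add, map_smul, smul_eq_mul] using this
    intro i
    fin_cases i
    · have := expand 0 0
      rw [coef2_xy, coef2_xy, coef2_xy, coef2_xy] at this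
      simpa using this
    · have := expand 0 1
      rw [coef2_xy, coef2_xy, coef2_xy, coef2_xy] at this
      simpa using this
    · have := expand 1 0
      rw [coef2_xy, coef2_xy, coef2_xy, coef2_xy] at this
      simpa using this
    · have := expand 1 1
      rw [coef2_xy, coef2_xy, coef2_xy, coef2_xy] at this
      simpa using this
  have hK : LinearMap.ker del ⊓ LinearMap.ker delta ⊓ bigraded 1 1
      = Submodule.span ℂ (Set.range B) := by
    apply le_antisymm
    · rintro z ⟨⟨hz1, hz2⟩, hz3⟩
      replace hz1 : del z = 0 := hz1
      replace hz2 : delta z = 0 := hz2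
      replace hz3 : z ∈ bigraded 1 1 := hz3
      rw [bigraded11, Submodule.mem_span_range_iff_exists_fun] at hz3
      obtain ⟨c, hc⟩ := hz3
      have hdelz : del (∑ p : Fin 3 × Fin 3, c p • (xg p.1 * yg p.2)) = 0 := by
        rw [hc]; exact hz1
      have hdeltaz : delta (∑ p : Fin 3 × Fin 3, c p • (xg p.1 * yg p.2)) = 0 := by
        rw [hc]; exact hz2
      have k2 : ∀ j₀ : Fin 3, c (2, j₀) = 0 := by
        intro j₀
        have h : coef3 (Fin.castAdd 3 (0:Fin 3)) (Fin.castAdd 3 (1:Fin 3)) (Fin.natAdd 3 j₀)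
            (del (∑ p : Fin 3 × Fin 3, c p • (xg p.1 * yg p.2))) = 0 := by
          rw [hdelz, map_zero]
        simp only [map_sum, map_smul] at h
        rw [Finset.sum_eq_single ((2:Fin 3), j₀)
          (by
            rintro ⟨i, j⟩ - hne
            rw [coef3_del_val del hdel, if_neg, smul_zero]
            rintro ⟨rfl, rfl⟩
            exact hne rfl)
          (by intro hnm; exact absurd (Finset.mem_univ _) hnm)] at h
        rw [coef3_del_val del hdel] at h
        simpa using h
      have k02 : c (0, 2) = 0 := by
        have h : coef3 (Fin.castAdd 3 (0:Fin 3)) (Fin.natAdd 3 (0:Fin 3)) (Fin.natAdd 3 (1:Fin 3))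
            (delta (∑ p : Fin 3 × Fin 3, c p • (xg p.1 * yg p.2))) = 0 := by
          rw [hdeltaz, map_zero]
        simp only [map_sum, map_smul] at h
        rw [Finset.sum_eq_single ((0:Fin 3), (2:Fin 3))
          (by
            rintro ⟨i, j⟩ - hne
            by_cases h2 : i = 2
            · subst h2
              rw [k2 j, zero_smul]
            · rw [coef3_delta_val t11 t12 t21 t22 delta hdelta 0 i j h2, if_neg, smul_zero]
              rintro ⟨rfl, rfl⟩
              exact hne rfl)
          (by intro hnm; exact absurd (Finset.mem_univ _) hnm)] at h
        rw [coef3_delta_val t11 t12 t21 t22 delta hdelta 0 0 2 (by decide)] at h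
        simpa using h
      have k12 : c (1, 2) = 0 := by
        have h : coef3 (Fin.castAdd 3 (1:Fin 3)) (Fin.natAdd 3 (0:Fin 3)) (Fin.natAdd 3 (1:Fin 3))
            (delta (∑ p : Fin 3 × Fin 3, c p • (xg p.1 * yg p.2))) = 0 := by
          rw [hdeltaz, map_zero]
        simp only [map_sum, map_smul] at h
        rw [Finset.sum_eq_single ((1:Fin 3), (2:Fin 3))
          (by
            rintro ⟨i, j⟩ - hne
            by_cases h2 : i = 2
            · subst h2
              rw [k2 j, zero_smul]
            · rw [coef3_delta_val t11 t12 t21 t22 delta hdelta 1 i j h2, if_neg, smul_zero]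
              rintro ⟨rfl, rfl⟩
              exact hne rfl)
          (by intro hnm; exact absurd (Finset.mem_univ _) hnm)] at h
        rw [coef3_delta_val t11 t12 t21 t22 delta hdelta 1 1 2 (by decide)] at h
        simpa using h
      rw [Submodule.mem_span_range_iff_exists_fun]
      refine ⟨![c (0, 0), c (0, 1), c (1, 0), c (1, 1)], ?_⟩
      rw [← hc, Fin.sum_univ_four, Fintype.sum_prod_type]
      simp only [Fin.sum_univ_three, k2, k02, k12, zero_smul, add_zero, zero_add, hB]
      simp only [Matrix.cons_val_zero, Matrix.cons_val_one, Matrix.head_cons,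
        Matrix.cons_val_two, Matrix.tail_cons, Matrix.cons_val_three]
      abel
    · rw [Submodule.span_le]
      have hker : ∀ (d : Lam →ₗ[ℂ] Lam), IsAntiderivation d → ∀ a b : Fin 3,
          d (xg a) = 0 → d (yg b) = 0 → d (xg a * yg b) = 0 := by
        intro d hd a b h1 h2
        rw [d_xg_mul d hd, h1, h2, zero_mul, mul_zero, sub_zero]
      have hbig : ∀ a b : Fin 3, xg a * yg b ∈ bigraded 1 1 :=
        fun a b => Submodule.subset_span ⟨{a}, {b}, by simp, by simp, (monom_single a b).symm⟩
      rintro m ⟨i, rfl⟩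
      fin_cases i
      · exact Submodule.mem_inf.mpr ⟨Submodule.mem_inf.mpr
          ⟨LinearMap.mem_ker.mpr (hker del hdel.1 0 0 hdel.2.1 (hdel.2.2.2.2 0)),
           LinearMap.mem_ker.mpr (hker delta hdelta.1 0 0 hdelta.2.1 hdelta.2.2.2.2.1)⟩,
          hbig 0 0⟩
      · exact Submodule.mem_inf.mpr ⟨Submodule.mem_inf.mpr
          ⟨LinearMap.mem_ker.mpr (hker del hdel.1 0 1 hdel.2.1 (hdel.2.2.2.2 1)),
           LinearMap.mem_ker.mpr (hker delta hdelta.1 0 1 hdelta.2.1 hdelta.2.2.2.2.2.1)⟩,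
          hbig 0 1⟩
      · exact Submodule.mem_inf.mpr ⟨Submodule.mem_inf.mpr
          ⟨LinearMap.mem_ker.mpr (hker del hdel.1 1 0 hdel.2.2.1 (hdel.2.2.2.2 0)),
           LinearMap.mem_ker.mpr (hker delta hdelta.1 1 0 hdelta.2.2.1 hdelta.2.2.2.2.1)⟩,
          hbig 1 0⟩
      · exact Submodule.mem_inf.mpr ⟨Submodule.mem_inf.mpr
          ⟨LinearMap.mem_ker.mpr (hker del hdel.1 1 1 hdel.2.2.1 (hdel.2.2.2.2 1)),
           LinearMap.mem_ker.mpr (hker delta hdelta.1 1 1 hdelta.2.2.1 hdelta.2.2.2.2.2.1)⟩,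
          hbig 1 1⟩
  rw [quotDim, hI, Submodule.comap_bot, Submodule.ker_subtype, hK]
  rw [(Submodule.quotEquivOfEqBot _ rfl).finrank_eq]
  rw [finrank_span_eq_card hBli]
  simp
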